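/- Let κ be a regular uncountable cardinal and assume principle C⁻(κ). Then every first countable, separable, Hausdorff topological space X with |X| = κ contains two disjoint open sets U and V, each of cardinality κ. -/

import Mathlib

open Cardinal

/-- `C` is closed and unbounded (club) in the ordinal `o`. -/
def ClubIn (o : Ordinal) (C : Set Ordinal) : Prop :=
  C ⊆ Set.Iio o ∧ (∀ α < o, ∃ β ∈ C, α < β) ∧
    ∀ α < o, 0 < α → (∀ β < α, ∃ γ ∈ C, β < γ ∧ γ < α) → α ∈ C

/-- `S` is a stationary subset of the ordinal `o`: it meets every club subset of `o`. -/
def StationaryIn (o : Ordinal) (S : Set Ordinal) : Prop :=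
  S ⊆ Set.Iio o ∧ ∀ C, ClubIn o C → (S ∩ C).Nonempty

/-- `S` is a cofinal (unbounded) subset of the ordinal `o`. -/
def CofinalIn (o : Ordinal) (S : Set Ordinal) : Prop :=
  S ⊆ Set.Iio o ∧ ∀ α < o, ∃ β ∈ S, α < β

/-- For a matrix `A` of subsets of `ℕ`, a finite sequence `t ∈ ω^{<ω}` and
`s : {0,…,|t|-1} → Ordinal`, this is `A[s,t] = ⋂_{i<|t|} A(s i, t i)`. -/
def MatInt (A : Ordinal → ℕ → Set ℕ) (t : List ℕ) (s : Fin t.length → Ordinal) : Set ℕ :=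
  ⋂ i, A (s i) (t.get i)

/-- Principle C⁻(κ). -/
def PrincipleCminus (κ : Cardinal) : Prop :=
  ∀ (T : Set (List ℕ)) (A : Ordinal → ℕ → Set ℕ),
    (∃ S : Set Ordinal, CofinalIn κ.ord S ∧
      ∀ t ∈ T, ∀ s : Fin t.length → Ordinal, Function.Injective s →
        (∀ i, s i ∈ S) → (MatInt A t s).Nonempty) ∨
    (∃ t ∈ T, ∃ D : Fin t.length → Set Ordinal,
      (∀ i, CofinalIn κ.ord (D i)) ∧
      ∀ s : Fin t.length → Ordinal, Function.Injective s →
        (∀ i, s i ∈ D i) → MatInt A t s = ∅)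

universe u

open Set Topology

/-!
Enumerate `X` injectively as `x α` (`α < κ`), fix a dense sequence `d` and countable open
neighbourhood bases `B p n`, and apply C⁻(κ) to the matrix `A(α, n) = {m | d m ∈ B (x α) n}` with
`T` the sequences of length two. Alternative (1) is impossible: two points of the cofinal set have
disjoint basic neighbourhoods, which no `d m` can meet simultaneously. Alternative (2) gives `a, b`
and cofinal `D₀, D₁` such that, by density, `B (x α) a` and `B (x β) b` are disjoint whenever
`α ∈ D₀`, `β ∈ D₁` and `α ≠ β`. Cofinal subsets of a regular `κ` have size `κ`, so `D₀` and `D₁`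
contain disjoint parts `E₀, E₁` of size `κ`, and `U = ⋃_{α ∈ E₀} B (x α) a`,
`V = ⋃_{β ∈ E₁} B (x β) b` work.
-/

theorem CofinalIn.lift_cof_le_mk {o : Ordinal.{u}} {E : Set Ordinal.{u}} (hE : CofinalIn o E) :
    lift.{u + 1} o.cof ≤ #E := by
  have hs : IsCofinal (Subtype.val ⁻¹' E : Set (Iio o)) := fun a ↦ by
    obtain ⟨β, hβE, hβ⟩ := hE.2 a.1 a.2
    exact ⟨⟨β, hE.1 hβE⟩, hβE, hβ.le⟩
  calc lift.{u + 1} o.cof = Order.cof (Iio o) := by rw [Ordinal.cof_Iio, Ordinal.lift_cof]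
    _ ≤ _ := Order.cof_le hs
    _ ≤ #E := mk_preimage_of_injective _ _ Subtype.val_injective

theorem Set.exists_disjoint_subsets_mk_eq {α : Type*} {W : Set α} (hW : ℵ₀ ≤ #W) :
    ∃ W₀ ⊆ W, ∃ W₁ ⊆ W, Disjoint W₀ W₁ ∧ #W₀ = #W ∧ #W₁ = #W := by
  obtain ⟨φ⟩ : Nonempty (W ⊕ W ≃ W) := Cardinal.eq.1 (by simp [add_eq_self hW])
  have hg : Function.Injective (Subtype.val ∘ φ) := Subtype.val_injective.comp φ.injective
  refine ⟨range (Subtype.val ∘ φ ∘ Sum.inl), ?_, range (Subtype.val ∘ φ ∘ Sum.inr), ?_, ?_, ?_, ?_⟩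
  · exact range_subset_iff.2 fun w ↦ (φ _).2
  · exact range_subset_iff.2 fun w ↦ (φ _).2
  · exact disjoint_range_iff.2 fun a b h ↦ Sum.inl_ne_inr (hg h)
  · exact mk_range_eq _ (hg.comp Sum.inl_injective)
  · exact mk_range_eq _ (hg.comp Sum.inr_injective)

theorem Set.exists_disjoint_subsets_le_mk {α : Type*} {c : Cardinal} (hc : ℵ₀ ≤ c)
    {D₀ D₁ : Set α} (h₀ : c ≤ #D₀) (h₁ : c ≤ #D₁) :
    ∃ E₀ ⊆ D₀, ∃ E₁ ⊆ D₁, Disjoint E₀ E₁ ∧ c ≤ #E₀ ∧ c ≤ #E₁ := by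
  by_cases hdiff : c ≤ #↥(D₀ \ D₁)
  · exact ⟨_, sdiff_subset, D₁, subset_rfl, disjoint_sdiff_left, hdiff, h₁⟩
  have hinter : c ≤ #↥(D₀ ∩ D₁) := by
    by_contra hinter
    have := (mk_union_le _ _).trans_lt
      (add_lt_of_lt hc (not_le.1 hdiff) (not_le.1 hinter))
    rw [sdiff_union_inter] at this
    exact this.not_ge h₀
  obtain ⟨W₀, hW₀, W₁, hW₁, hW, hW₀c, hW₁c⟩ :=
    exists_disjoint_subsets_mk_eq (hc.trans hinter)
  exact ⟨W₀, hW₀.trans inter_subset_left, W₁, hW₁.trans inter_subset_right, hW,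
    hW₀c ▸ hinter, hW₁c ▸ hinter⟩

theorem exists_disjoint_isOpen_le_mk {X : Type*} [TopologicalSpace X] {c : Cardinal}
    (hc : ℵ₀ ≤ c) {P₀ P₁ : Set X} (h₀ : c ≤ #P₀) (h₁ : c ≤ #P₁) {W₀ W₁ : X → Set X}
    (hW₀ : ∀ p, p ∈ W₀ p ∧ IsOpen (W₀ p)) (hW₁ : ∀ q, q ∈ W₁ q ∧ IsOpen (W₁ q))
    (hW : ∀ p ∈ P₀, ∀ q ∈ P₁, p ≠ q → Disjoint (W₀ p) (W₁ q)) :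
    ∃ U V : Set X, IsOpen U ∧ IsOpen V ∧ Disjoint U V ∧ c ≤ #U ∧ c ≤ #V := by
  obtain ⟨Q₀, hQ₀, Q₁, hQ₁, hQ, hQ₀c, hQ₁c⟩ := exists_disjoint_subsets_le_mk hc h₀ h₁
  refine ⟨⋃ p ∈ Q₀, W₀ p, ⋃ q ∈ Q₁, W₁ q, isOpen_biUnion fun p _ ↦ (hW₀ p).2,
    isOpen_biUnion fun q _ ↦ (hW₁ q).2, ?_, ?_, ?_⟩
  · simp only [disjoint_iUnion_left, disjoint_iUnion_right]
    exact fun q hq p hp ↦ hW p (hQ₀ hp) q (hQ₁ hq) (hQ.ne_of_mem hp hq)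
  · exact hQ₀c.trans (mk_le_mk_of_subset fun p hp ↦ mem_biUnion hp (hW₀ p).1)
  · exact hQ₁c.trans (mk_le_mk_of_subset fun q hq ↦ mem_biUnion hq (hW₁ q).1)

theorem matInt_pair (A : Ordinal → ℕ → Set ℕ) (a b : ℕ) (α β : Ordinal) :
    MatInt A [a, b] ![α, β] = A α a ∩ A β b := by
  ext m
  simp [MatInt, Fin.forall_fin_two]

theorem lift_le_mk_image_of_cofinalIn {X : Type u} {κ : Cardinal.{0}} (hκ : κ.IsRegular)
    {E : Set Ordinal.{0}} (hE : CofinalIn κ.ord E) {x : Ordinal.{0} → X}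
    (hx : InjOn x (Iio κ.ord)) : lift.{u} κ ≤ #(x '' E) := by
  have hE' : lift.{1} κ ≤ #E := hκ.cof_ord ▸ hE.lift_cof_le_mk
  rw [← lift_le.{1}, mk_image_eq_of_injOn_lift x E (hx.mono hE.1)]
  simpa using lift_le.{u}.2 hE'

theorem exists_injOn_Iio_ord {X : Type u} [Nonempty X] {κ : Cardinal.{0}}
    (hX : lift.{u} κ ≤ #X) : ∃ x : Ordinal.{0} → X, InjOn x (Iio κ.ord) := by
  obtain ⟨e⟩ : Nonempty (Iio κ.ord ↪ X) := by
    rw [← lift_mk_le', mk_Iio_ordinal]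
    simpa using lift_le.{1}.2 hX
  refine ⟨Function.extend Subtype.val e fun _ ↦ Classical.arbitrary X, fun α hα β hβ h ↦ ?_⟩
  rw [Subtype.val_injective.extend_apply e _ ⟨α, hα⟩,
    Subtype.val_injective.extend_apply e _ ⟨β, hβ⟩] at h
  exact congrArg Subtype.val (e.injective h)

section NeighbourhoodTrace

variable {X : Type u} [TopologicalSpace X] {d : ℕ → X} {B : X → ℕ → Set X} {x : Ordinal → X}

theorem exists_matInt_pair_eq_empty [T2Space X] (hB : ∀ p, (𝓝 p).HasBasis (fun _ ↦ True) (B p))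
    {α β : Ordinal} (h : x α ≠ x β) :
    ∃ a b, MatInt (fun γ n ↦ d ⁻¹' B (x γ) n) [a, b] ![α, β] = ∅ := by
  obtain ⟨a, -, b, -, hab⟩ := ((hB _).disjoint_iff (hB _)).1 (disjoint_nhds_nhds.2 h)
  exact ⟨a, b, by rw [matInt_pair, ← preimage_inter, hab.inter_eq, preimage_empty]⟩

theorem disjoint_of_matInt_pair_eq_empty (hd : DenseRange d) (hB : ∀ p n, IsOpen (B p n))
    {a b : ℕ} {α β : Ordinal} (h : MatInt (fun γ n ↦ d ⁻¹' B (x γ) n) [a, b] ![α, β] = ∅) :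
    Disjoint (B (x α) a) (B (x β) b) := by
  rw [matInt_pair, ← preimage_inter] at h
  refine disjoint_iff_inter_eq_empty.2 (not_nonempty_iff_eq_empty.1 fun hne ↦ ?_)
  obtain ⟨m, hm⟩ := hd.exists_mem_open ((hB _ a).inter (hB _ b)) hne
  exact h.subset hm

end NeighbourhoodTrace

theorem exists_disjoint_isOpen_lift_le_mk {X : Type u} [TopologicalSpace X] [T2Space X]
    [TopologicalSpace.SeparableSpace X] [FirstCountableTopology X] {κ : Cardinal.{0}}
    (hκ : κ.IsRegular) (hC : PrincipleCminus κ) {x : Ordinal.{0} → X}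
    (hx : InjOn x (Iio κ.ord)) :
    ∃ U V : Set X, IsOpen U ∧ IsOpen V ∧ Disjoint U V ∧
      lift.{u} κ ≤ #U ∧ lift.{u} κ ≤ #V := by
  have : Nonempty X := ⟨x 0⟩
  obtain ⟨d, hd⟩ := TopologicalSpace.exists_dense_seq X
  choose B hB hBasis using fun p : X ↦ (nhds_basis_opens p).exists_antitone_subbasis
  rcases hC {t | t.length = 2} (fun γ n ↦ d ⁻¹' B (x γ) n) with
    ⟨S, hS, hSA⟩ | ⟨t, ht, D, hD, hDA⟩
  · obtain ⟨α, hαS, -⟩ := hS.2 0 (ord_pos.2 hκ.pos)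
    obtain ⟨β, hβS, hαβ⟩ := hS.2 α (hS.1 hαS)
    obtain ⟨a, b, hab⟩ := exists_matInt_pair_eq_empty (fun p ↦ (hBasis p).toHasBasis)
      (hx.ne (hS.1 hαS) (hS.1 hβS) hαβ.ne)
    exact absurd hab (hSA [a, b] rfl ![α, β] (injective_pair_iff_ne.2 hαβ.ne)
      (Fin.forall_fin_two.2 ⟨hαS, hβS⟩)).ne_empty
  · obtain ⟨a, b, rfl⟩ := List.length_eq_two.1 ht
    refine exists_disjoint_isOpen_le_mk (aleph0_le_lift.2 hκ.aleph0_le)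
      (lift_le_mk_image_of_cofinalIn hκ (hD 0) hx) (lift_le_mk_image_of_cofinalIn hκ (hD 1) hx)
      (hB · a) (hB · b) ?_
    rintro _ ⟨α, hα, rfl⟩ _ ⟨β, hβ, rfl⟩ hne
    exact disjoint_of_matInt_pair_eq_empty hd (fun p n ↦ (hB p n).2)
      (hDA ![α, β] (injective_pair_iff_ne.2 (ne_of_apply_ne x hne)) (Fin.forall_fin_two.2 ⟨hα, hβ⟩))

theorem statement_18_general {X : Type u} [TopologicalSpace X] [T2Space X]
    [TopologicalSpace.SeparableSpace X] [FirstCountableTopology X]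
    (κ : Cardinal.{0}) (hreg : κ.IsRegular)
    (hC : PrincipleCminus κ) (hX : #X = Cardinal.lift.{u, 0} κ) :
    ∃ U V : Set X, IsOpen U ∧ IsOpen V ∧ Disjoint U V ∧
      #U = Cardinal.lift.{u, 0} κ ∧ #V = Cardinal.lift.{u, 0} κ := by
  have : Nonempty X := by
    rw [← mk_ne_zero_iff, hX, Ne, lift_eq_zero]
    exact hreg.pos.ne'
  obtain ⟨x, hx⟩ := exists_injOn_Iio_ord hX.ge
  obtain ⟨U, V, hU, hV, hUV, hκU, hκV⟩ := exists_disjoint_isOpen_lift_le_mk hreg hC hx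
  exact ⟨U, V, hU, hV, hUV, (hX ▸ mk_set_le U).antisymm hκU,
    (hX ▸ mk_set_le V).antisymm hκV⟩

/-- Under C⁻(κ), every first countable, separable, Hausdorff space of cardinality κ
contains two disjoint open sets, each of cardinality κ. -/
theorem statement_18 {X : Type u} [TopologicalSpace X] [T2Space X]
    [TopologicalSpace.SeparableSpace X] [FirstCountableTopology X]
    (κ : Cardinal.{0}) (hreg : κ.IsRegular) (hunc : ℵ₀ < κ)
    (hC : PrincipleCminus κ) (hX : #X = Cardinal.lift.{u, 0} κ) :
    ∃ U V : Set X, IsOpen U ∧ IsOpen V ∧ Disjoint U V ∧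
      #U = Cardinal.lift.{u, 0} κ ∧ #V = Cardinal.lift.{u, 0} κ :=
  statement_18_general κ hreg hC hX
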